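/- arXiv:2509.11497 — 2 statements merged into one kernel-verified Lean document; each statement's English description precedes it below -/
import Mathlib

section
/- Let $W$ be a finite Coxeter group, $c$ a standard Coxeter element of rank $r$ (so $\ell_S(c) = r$), and $w \in W$ with $\ell_S(wc) = \ell_S(w) + r$. If $e = \pi_0 <_T \pi_1 <_T \cdots <_T \pi_r = c$ is a maximal chain in the noncrossing partition lattice $[e, c]_T$ such that $w\pi_0 \le_B w\pi_1 \le_B \cdots \le_B w\pi_r$ in Bruhat order, then in fact all those inequalities are cover relations: $w\pi_{i-1} \lessdot_B w\pi_i$ for each $i$, i.e., $\ell_S(w\pi_i) = \ell_S(w\pi_{i-1}) + 1$. -/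
/-- The Bruhat cover relation. -/
def BruhatCover {B W : Type*} [Group W] {M : CoxeterMatrix B} (cs : CoxeterSystem M W)
    (u v : W) : Prop :=
  (∃ t : W, cs.IsReflection t ∧ v = u * t) ∧ cs.length v = cs.length u + 1

/-- The Bruhat order. -/
def BruhatLE {B W : Type*} [Group W] {M : CoxeterMatrix B} (cs : CoxeterSystem M W)
    (u v : W) : Prop :=
  Relation.ReflTransGen (BruhatCover cs) u v

/-- Reflection length: the minimal length of a word in the reflections representing `w`. -/
noncomputable def reflLength {B W : Type*} [Group W] {M : CoxeterMatrix B}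
    (cs : CoxeterSystem M W) (w : W) : ℕ :=
  sInf {n | ∃ l : List W, (∀ t ∈ l, cs.IsReflection t) ∧ l.length = n ∧ l.prod = w}

/-- Absolute order: `u ≤_T v` iff `ℓ_T(v) = ℓ_T(u) + ℓ_T(u⁻¹ v)`. -/
def AbsLE {B W : Type*} [Group W] {M : CoxeterMatrix B} (cs : CoxeterSystem M W)
    (u v : W) : Prop :=
  reflLength cs v = reflLength cs u + reflLength cs (u⁻¹ * v)

/-- `c` is a standard Coxeter element: a product of all the simple reflections,
each occurring exactly once, in some order. -/
def IsStandardCoxeterElement {B W : Type*} [Group W] {M : CoxeterMatrix B}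
    (cs : CoxeterSystem M W) (c : W) : Prop :=
  ∃ l : List B, l.Nodup ∧ (∀ b : B, b ∈ l) ∧ c = cs.wordProd l

lemma bruhatLE_length_le {B W : Type*} [Group W] {M : CoxeterMatrix B}
    (cs : CoxeterSystem M W) {u v : W} (h : BruhatLE cs u v) :
    cs.length u ≤ cs.length v := by
  induction h with
  | refl => exact le_refl _
  | tail _ hcov ih => have := hcov.2; omega

lemma bruhatLE_length_lt {B W : Type*} [Group W] {M : CoxeterMatrix B}
    (cs : CoxeterSystem M W) {u v : W} (h : BruhatLE cs u v) (hne : u ≠ v) :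
    cs.length u + 1 ≤ cs.length v := by
  cases h with
  | refl => exact absurd rfl hne
  | tail h' hcov =>
    have := hcov.2
    have := bruhatLE_length_le cs h'
    omega

lemma reflLength_one {B W : Type*} [Group W] {M : CoxeterMatrix B}
    (cs : CoxeterSystem M W) : reflLength cs 1 = 0 := by
  refine Nat.eq_zero_of_le_zero (Nat.sInf_le ?_)
  exact ⟨[], by simp, by simp, by simp⟩

theorem stmt1 {B W : Type*} [Group W] [Finite W] [Fintype B] {M : CoxeterMatrix B}
    (cs : CoxeterSystem M W) {r : ℕ} (hr : Fintype.card B = r)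
    (c : W) (hc : IsStandardCoxeterElement cs c) (hcS : cs.length c = r)
    (w : W) (hw : cs.length (w * c) = cs.length w + r)
    (π : Fin (r + 1) → W) (hπ0 : π 0 = 1) (hπr : π (Fin.last r) = c)
    -- `π` is a maximal chain in the noncrossing partition lattice `[e, c]_T`:
    (hchain : ∀ i : Fin r, AbsLE cs (π i.castSucc) (π i.succ) ∧
      reflLength cs ((π i.castSucc)⁻¹ * π i.succ) = 1)
    (hinterval : ∀ i : Fin (r + 1), AbsLE cs (π i) c)
    -- the translated chain is increasing in Bruhat order:
    (hB : ∀ i : Fin r, BruhatLE cs (w * π i.castSucc) (w * π i.succ)) :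
    ∀ i : Fin r, cs.length (w * π i.succ) = cs.length (w * π i.castSucc) + 1 := by
  -- each step strictly increases length
  have hstep : ∀ i : Fin r,
      cs.length (w * π i.castSucc) + 1 ≤ cs.length (w * π i.succ) := by
    intro i
    refine bruhatLE_length_lt cs (hB i) ?_
    intro heq
    have hππ : π i.castSucc = π i.succ := by
      exact mul_left_cancel heq
    have h1 : (π i.castSucc)⁻¹ * π i.succ = 1 := by
      rw [hππ]; group
    have := (hchain i).2
    rw [h1, reflLength_one] at this
    omega
  -- lower bound
  have hlow : ∀ k (hk : k ≤ r),
      cs.length w + k ≤ cs.length (w * π ⟨k, Nat.lt_succ_of_le hk⟩) := by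
    intro k
    induction k with
    | zero =>
      intro hk
      have : (⟨0, Nat.lt_succ_of_le hk⟩ : Fin (r+1)) = 0 := rfl
      rw [this, hπ0, mul_one]; omega
    | succ k ih =>
      intro hk
      have hk' : k < r := hk
      have h1 := hstep ⟨k, hk'⟩
      have h2 := ih (Nat.le_of_lt hk')
      have hcast : (⟨k, hk'⟩ : Fin r).castSucc = ⟨k, Nat.lt_succ_of_le (Nat.le_of_lt hk')⟩ := rfl
      have hsucc : (⟨k, hk'⟩ : Fin r).succ = ⟨k + 1, Nat.lt_succ_of_le hk⟩ := rfl
      rw [hcast, hsucc] at h1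
      omega
  -- upper bound (downward from r)
  have hup : ∀ j (hj : j ≤ r),
      cs.length (w * π ⟨r - j, Nat.lt_succ_of_le (Nat.sub_le r j)⟩) + j ≤ cs.length w + r := by
    intro j
    induction j with
    | zero =>
      intro hj
      have : (⟨r - 0, Nat.lt_succ_of_le (Nat.sub_le r 0)⟩ : Fin (r+1)) = Fin.last r := by
        ext; simp
      rw [this, hπr, hw]; omega
    | succ j ih =>
      intro hj
      have hj' : j ≤ r := Nat.le_of_succ_le hj
      have hlt : r - (j + 1) < r := by omega
      have h1 := hstep ⟨r - (j + 1), hlt⟩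
      have hcast : (⟨r - (j + 1), hlt⟩ : Fin r).castSucc
          = ⟨r - (j + 1), Nat.lt_succ_of_le (Nat.sub_le r (j+1))⟩ := rfl
      have hsucc : (⟨r - (j + 1), hlt⟩ : Fin r).succ
          = ⟨r - j, Nat.lt_succ_of_le (Nat.sub_le r j)⟩ := by
        ext; simp; omega
      rw [hcast, hsucc] at h1
      have h2 := ih hj'
      omega
  -- combine: length (w * π k) = length w + k for all k
  have heq : ∀ k (hk : k ≤ r),
      cs.length (w * π ⟨k, Nat.lt_succ_of_le hk⟩) = cs.length w + k := by
    intro k hk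
    have h1 := hlow k hk
    have h2 := hup (r - k) (Nat.sub_le r k)
    have hrk : r - (r - k) = k := by omega
    have : (⟨r - (r - k), Nat.lt_succ_of_le (Nat.sub_le r (r - k))⟩ : Fin (r+1))
        = ⟨k, Nat.lt_succ_of_le hk⟩ := by ext; simp [hrk]
    rw [this] at h2
    omega
  intro i
  have h1 := heq i.val (Nat.le_of_lt i.isLt)
  have h2 := heq (i.val + 1) i.isLt
  have hcast : i.castSucc = (⟨i.val, Nat.lt_succ_of_le (Nat.le_of_lt i.isLt)⟩ : Fin (r+1)) := rfl
  have hsucc : i.succ = (⟨i.val + 1, Nat.lt_succ_of_le i.isLt⟩ : Fin (r+1)) := rfl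
  rw [hcast, hsucc]
  omega
end

section
/- Let $W$ be a finite Coxeter group with standard Coxeter element $c$, and let $u_1, u_2 \in W_c^+ = \{u : \ell_S(uc) = \ell_S(u) + \ell_S(c)\}$ with $u_2 = s^* u_1$ for a simple reflection $s^*$ with $\ell_S(u_2) = \ell_S(u_1) + 1$. Suppose $u_2 \not\le_B u_1 c$. Then no element of the Bruhat interval $[u_1, u_1 c]_B$ has $s^*$ as a left descent, and every element of $[u_2, u_2 c]_B$ has $s^*$ as a left descent; consequently the map $z \mapsto s^* z$ is a poset isomorphism from $[u_1, u_1 c]_B$ to $[u_2, u_2 c]_B$. -/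
/-- The Bruhat interval `[u, v]_B`. -/
def BruhatInterval {B W : Type*} [Group W] {M : CoxeterMatrix B} (cs : CoxeterSystem M W)
    (u v : W) : Set W :=
  {z | BruhatLE cs u z ∧ BruhatLE cs z v}

/-!
Everything rests on the lifting property of the Bruhat order: if `x ≤ y` then `s x ≤ y` or
`s x ≤ s y`, and `x ≤ s y` or `s x ≤ s y`. With `s = s*`, it turns `s* u₁ ≰ u₁ c` into: `s*` is
an ascent of every element of `[u₁, u₁ c]` and a descent of every element of `[s* u₁, s* u₁ c]`,
and left multiplication by `s*` is an order isomorphism between the elements with ascent `s*`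
and those with descent `s*`.

The lifting property follows by induction along chains of covers from the fact that `x ⋖ y`,
with `s` an ascent of `x` and a descent of `y`, forces `y = s x`. That is an instance of the
strong exchange condition, whose nontrivial half comes from the sign representation of `W` on
`W × {±1}`, `sᵢ ↦ ((t, ε) ↦ (sᵢ t sᵢ, ±ε))` with the sign flipping exactly when `t = sᵢ`: the
sign it attaches to `(w, t)` is `(-1)` to the number of occurrences of `t` in the right
inversion sequence of any word for `w`, so it is `-1` exactly for the right inversions `t`
of `w`.
-/

open List

theorem List.even_count_of_getElem_add_eq {α : Type*} [BEq α] (L : List α) (n : ℕ)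
    (hL : L.length = 2 * n) (hper : ∀ k (hk : k < n), L[k + n] = L[k]) (a : α) :
    Even (L.count a) := by
  have hhalf : L.drop n = L.take n :=
    ext_getElem (by simp; omega) fun k h₁ h₂ => by
      simp only [getElem_drop, getElem_take, Nat.add_comm n k]
      exact hper k (by simp at h₂; omega)
  rw [← take_append_drop n L, count_append, hhalf]
  exact ⟨_, rfl⟩

namespace CoxeterSystem

noncomputable section

open scoped Classical

variable {B W : Type*} [Group W] {M : CoxeterMatrix B} (cs : CoxeterSystem M W)

def reflectionFlip (i : B) (p : W × ℤˣ) : W × ℤˣ :=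
  (cs.simple i * p.1 * cs.simple i, if p.1 = cs.simple i then -p.2 else p.2)

theorem simple_mul_mul_simple_eq_simple_iff (i : B) (t : W) :
    cs.simple i * t * cs.simple i = cs.simple i ↔ t = cs.simple i := by
  rw [mul_assoc, ← eq_inv_mul_iff_mul_eq, inv_simple, ← mul_inv_eq_iff_eq_mul, inv_simple,
    simple_mul_simple_cancel_right]

theorem reflectionFlip_involutive (i : B) : Function.Involutive (cs.reflectionFlip i) := by
  rintro ⟨t, ε⟩
  simp only [reflectionFlip, simple_mul_mul_simple_eq_simple_iff]
  refine Prod.ext ?_ ?_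
  · simp [mul_assoc, simple_mul_simple_cancel_left]
  · split_ifs <;> simp

def reflectionPerm (i : B) : Equiv.Perm (W × ℤˣ) := (cs.reflectionFlip_involutive i).toPerm

theorem reflectionPerm_apply (i : B) (t : W) (ε : ℤˣ) :
    cs.reflectionPerm i (t, ε) =
      (cs.simple i * t * cs.simple i, if t = cs.simple i then -ε else ε) := rfl

theorem prod_map_reflectionPerm_apply (ω : List B) (t : W) (ε : ℤˣ) :
    (ω.map cs.reflectionPerm).prod (t, ε) =
      (cs.wordProd ω * t * (cs.wordProd ω)⁻¹, ε * (-1) ^ (cs.rightInvSeq ω).count t) := by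
  induction ω generalizing t ε with
  | nil => simp
  | cons i ω ih =>
    rw [map_cons, prod_cons, Equiv.Perm.mul_apply, ih, reflectionPerm_apply]
    have hcond : cs.wordProd ω * t * (cs.wordProd ω)⁻¹ = cs.simple i ↔
        (cs.wordProd ω)⁻¹ * cs.simple i * cs.wordProd ω = t := by
      constructor <;> intro h <;> rw [← h] <;> group
    simp only [rightInvSeq, count_cons, beq_iff_eq, hcond, wordProd_cons, mul_inv_rev, inv_simple]
    refine Prod.ext (by group) ?_
    split_ifs <;> simp [pow_succ]

theorem prod_map_reflectionPerm_reverse_alternatingWord (i i' : B) (m : ℕ) :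
    ((alternatingWord i' i (2 * m)).reverse.map cs.reflectionPerm).prod =
      (cs.reflectionPerm i * cs.reflectionPerm i') ^ m := by
  induction m with
  | zero => simp [alternatingWord]
  | succ m ih =>
    have hword : alternatingWord i' i (2 * (m + 1)) = i' :: i :: alternatingWord i' i (2 * m) := by
      rw [mul_add, mul_one, alternatingWord_succ', alternatingWord_succ']
      simp
    rw [hword, pow_succ, ← ih]
    simp

theorem isLiftable_reflectionPerm : M.IsLiftable cs.reflectionPerm := by
  intro i i'
  refine Equiv.ext fun ⟨t, ε⟩ => ?_
  have hπ : cs.wordProd (alternatingWord i' i (2 * M i i')) = 1 := by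
    simp [prod_alternatingWord_eq_mul_pow]
  have heven : Even ((cs.leftInvSeq (alternatingWord i' i (2 * M i i'))).count t) := by
    -- the `k`-th entry is `sᵢ' (sᵢ sᵢ')^k`, periodic in `k` with period `M i i'`
    refine even_count_of_getElem_add_eq _ (M i i') (by simp) (fun k hk => ?_) t
    rw [getElem_leftInvSeq_alternatingWord cs i' i _ _ (by omega),
      getElem_leftInvSeq_alternatingWord cs i' i _ _ (by omega),
      prod_alternatingWord_eq_mul_pow, prod_alternatingWord_eq_mul_pow]
    simp [Nat.mul_add_div, pow_add]
  rw [← prod_map_reflectionPerm_reverse_alternatingWord, prod_map_reflectionPerm_apply,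
    rightInvSeq_reverse, count_reverse, heven.neg_one_pow]
  simp [hπ]

def signRep : W →* Equiv.Perm (W × ℤˣ) :=
  cs.lift ⟨cs.reflectionPerm, cs.isLiftable_reflectionPerm⟩

theorem signRep_wordProd (ω : List B) :
    cs.signRep (cs.wordProd ω) = (ω.map cs.reflectionPerm).prod := by
  rw [wordProd, map_list_prod, map_map]
  congr 2
  funext i
  exact cs.lift_apply_simple cs.isLiftable_reflectionPerm i

def reflectionSign (w t : W) : ℤˣ := (cs.signRep w (t, 1)).2

theorem reflectionSign_wordProd (ω : List B) (t : W) :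
    cs.reflectionSign (cs.wordProd ω) t = (-1) ^ (cs.rightInvSeq ω).count t := by
  rw [reflectionSign, signRep_wordProd, prod_map_reflectionPerm_apply, one_mul]

theorem signRep_apply (w t : W) (ε : ℤˣ) :
    cs.signRep w (t, ε) = (w * t * w⁻¹, ε * cs.reflectionSign w t) := by
  obtain ⟨ω, rfl⟩ := cs.wordProd_surjective w
  rw [reflectionSign_wordProd, signRep_wordProd, prod_map_reflectionPerm_apply]

theorem reflectionSign_mul (w w' t : W) :
    cs.reflectionSign (w * w') t =
      cs.reflectionSign w' t * cs.reflectionSign w (w' * t * w'⁻¹) := by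
  have h := congrArg Prod.snd (cs.signRep_apply (w * w') t 1)
  rwa [map_mul, Equiv.Perm.mul_apply, signRep_apply, signRep_apply, one_mul, one_mul,
    eq_comm] at h

theorem reflectionSign_one (t : W) : cs.reflectionSign 1 t = 1 := by
  simpa using cs.reflectionSign_wordProd [] t

theorem mem_rightInvSeq_of_reflectionSign_eq_neg_one {ω : List B} {t : W}
    (h : cs.reflectionSign (cs.wordProd ω) t = -1) : t ∈ cs.rightInvSeq ω := by
  by_contra hmem
  rw [reflectionSign_wordProd, count_eq_zero_of_not_mem hmem, pow_zero] at h
  exact absurd h (by decide)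

variable {cs}

theorem IsReflection.reflectionSign_self {t : W} (ht : cs.IsReflection t) :
    cs.reflectionSign t t = -1 := by
  obtain ⟨w, i, rfl⟩ := ht
  have hsimple : cs.reflectionSign (cs.simple i) (cs.simple i) = -1 := by
    simpa using cs.reflectionSign_wordProd [i] (cs.simple i)
  have hconj : w⁻¹ * (w * cs.simple i * w⁻¹) * w⁻¹⁻¹ = cs.simple i := by group
  have hinv := cs.reflectionSign_mul w w⁻¹ (w * cs.simple i * w⁻¹)
  rw [mul_inv_cancel, reflectionSign_one, hconj] at hinv
  rw [reflectionSign_mul, hconj, reflectionSign_mul, mul_inv_cancel_right, hsimple, neg_one_mul,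
    mul_neg, ← hinv]

theorem IsRightInversion.reflectionSign_eq_neg_one {w t : W} (h : cs.IsRightInversion w t) :
    cs.reflectionSign w t = -1 := by
  obtain ⟨ht, hlt⟩ := h
  refine (Int.units_eq_one_or _).resolve_left fun hone => ?_
  have hsign : cs.reflectionSign (w * t) t = -1 := by
    rw [reflectionSign_mul, ht.reflectionSign_self, mul_inv_cancel_right, hone, mul_one]
  obtain ⟨ω, hω, hwt⟩ := cs.exists_isReduced (w * t)
  rw [hwt] at hsign
  have hinv := cs.isRightInversion_of_mem_rightInvSeq hω
    (cs.mem_rightInvSeq_of_reflectionSign_eq_neg_one hsign)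
  rw [← hwt] at hinv
  exact ht.isRightInversion_mul_left_iff.mp hinv ⟨ht, hlt⟩

theorem IsRightInversion.exists_wordProd_eraseIdx {ω : List B} {t : W}
    (h : cs.IsRightInversion (cs.wordProd ω) t) :
    ∃ j < ω.length, cs.wordProd ω * t = cs.wordProd (ω.eraseIdx j) := by
  obtain ⟨j, hj, rfl⟩ := mem_iff_getElem.mp
    (cs.mem_rightInvSeq_of_reflectionSign_eq_neg_one h.reflectionSign_eq_neg_one)
  refine ⟨j, by simpa using hj, ?_⟩
  rw [← getD_eq_getElem _ 1 hj, wordProd_mul_getD_rightInvSeq]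

theorem isLeftDescent_simple_mul_iff {w : W} {i : B} :
    cs.IsLeftDescent (cs.simple i * w) i ↔ ¬cs.IsLeftDescent w i := by
  rw [isLeftDescent_iff_not_isLeftDescent_mul, simple_mul_simple_cancel_left]

end

end CoxeterSystem

section Bruhat

open CoxeterSystem

variable {B W : Type*} [Group W] {M : CoxeterMatrix B} {cs : CoxeterSystem M W} {i : B}
  {x y : W}

theorem BruhatLE.trans {z : W} (hxy : BruhatLE cs x y) (hyz : BruhatLE cs y z) :
    BruhatLE cs x z :=
  Relation.ReflTransGen.trans hxy hyz

theorem BruhatCover.bruhatLE (h : BruhatCover cs x y) : BruhatLE cs x y :=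
  Relation.ReflTransGen.single h

theorem bruhatCover_simple_mul (h : ¬cs.IsLeftDescent x i) :
    BruhatCover cs x (cs.simple i * x) :=
  ⟨⟨x⁻¹ * cs.simple i * x, by simpa using (cs.isReflection_simple i).conj x⁻¹, by group⟩,
    cs.not_isLeftDescent_iff.mp h⟩

theorem bruhatLE_simple_mul (h : ¬cs.IsLeftDescent x i) : BruhatLE cs x (cs.simple i * x) :=
  (bruhatCover_simple_mul h).bruhatLE

theorem simple_mul_bruhatLE (h : cs.IsLeftDescent x i) : BruhatLE cs (cs.simple i * x) x := by
  simpa only [simple_mul_simple_cancel_left] using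
    bruhatLE_simple_mul (cs.isLeftDescent_iff_not_isLeftDescent_mul.mp h)

theorem BruhatCover.simple_mul (h : BruhatCover cs x y)
    (hlen : cs.length (cs.simple i * y) = cs.length (cs.simple i * x) + 1) :
    BruhatCover cs (cs.simple i * x) (cs.simple i * y) := by
  obtain ⟨⟨t, ht, rfl⟩, -⟩ := h
  exact ⟨⟨t, ht, (mul_assoc _ _ _).symm⟩, hlen⟩

theorem BruhatCover.simple_mul_eq (h : BruhatCover cs x y) (hx : ¬cs.IsLeftDescent x i)
    (hy : cs.IsLeftDescent y i) : cs.simple i * x = y := by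
  -- strong exchange deletes a letter of a reduced word `i :: α` for `y` to give `x = y t`;
  -- deleting any letter but the first would leave `sᵢ` a descent of `x`
  obtain ⟨⟨t, ht, rfl⟩, hlen⟩ := h
  obtain ⟨α, hα, hsy⟩ := cs.exists_isReduced (cs.simple i * (x * t))
  have hy' : cs.wordProd (i :: α) = x * t := by
    rw [wordProd_cons, ← hsy, simple_mul_simple_cancel_left]
  have hαlen : cs.length (x * t) = α.length + 1 := by
    rw [← hα.eq, ← hsy]; exact (cs.isLeftDescent_iff.mp hy).symm
  have hxt : x * t * t = x := by rw [mul_assoc, ht.mul_self, mul_one]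
  have hinv : cs.IsRightInversion (cs.wordProd (i :: α)) t :=
    ⟨ht, by rw [hy', hxt]; omega⟩
  obtain ⟨j, hj, hx'⟩ := hinv.exists_wordProd_eraseIdx
  rw [hy', hxt] at hx'
  rcases j with _ | j
  · conv_lhs => rw [hx', eraseIdx_cons_zero, ← hsy, simple_mul_simple_cancel_left]
  · rw [eraseIdx_cons_succ, wordProd_cons] at hx'
    have hj' : j < α.length := by simpa using hj
    have hsx : cs.length (cs.simple i * x) ≤ α.length - 1 := by
      rw [hx', simple_mul_simple_cancel_left, ← length_eraseIdx_of_lt hj']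
      exact cs.length_wordProd_le _
    have := cs.not_isLeftDescent_iff.mp hx
    omega

theorem BruhatLE.simple_mul_bruhatLE_or (h : BruhatLE cs x y) (i : B) :
    BruhatLE cs (cs.simple i * x) y ∨ BruhatLE cs (cs.simple i * x) (cs.simple i * y) := by
  induction h with
  | refl => exact Or.inr Relation.ReflTransGen.refl
  | @tail y z _ hyz ih =>
    rcases ih with ih | ih
    · exact Or.inl (ih.trans hyz.bruhatLE)
    by_cases hy : cs.IsLeftDescent y i <;> by_cases hz : cs.IsLeftDescent z i
    · rw [isLeftDescent_iff] at hy hz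
      exact Or.inr (ih.trans (hyz.simple_mul (i := i) (by have := hyz.2; omega)).bruhatLE)
    · exact Or.inl (ih.trans ((simple_mul_bruhatLE hy).trans hyz.bruhatLE))
    · exact Or.inl (hyz.simple_mul_eq hy hz ▸ ih)
    · rw [not_isLeftDescent_iff] at hy hz
      exact Or.inr (ih.trans (hyz.simple_mul (i := i) (by have := hyz.2; omega)).bruhatLE)

theorem BruhatLE.bruhatLE_simple_mul_or (h : BruhatLE cs x y) (i : B) :
    BruhatLE cs x (cs.simple i * y) ∨ BruhatLE cs (cs.simple i * x) (cs.simple i * y) := by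
  induction h with
  | refl => exact Or.inr Relation.ReflTransGen.refl
  | @tail y z hxy hyz ih =>
    by_cases hy : cs.IsLeftDescent y i <;> by_cases hz : cs.IsLeftDescent z i
    · rw [isLeftDescent_iff] at hy hz
      have hcov := (hyz.simple_mul (i := i) (by have := hyz.2; omega)).bruhatLE
      exact ih.imp (·.trans hcov) (·.trans hcov)
    · have hle := (simple_mul_bruhatLE hy).trans (hyz.bruhatLE.trans (bruhatLE_simple_mul hz))
      exact ih.imp (·.trans hle) (·.trans hle)
    · rw [← hyz.simple_mul_eq hy hz, simple_mul_simple_cancel_left]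
      exact Or.inl hxy
    · rw [not_isLeftDescent_iff] at hy hz
      have hcov := (hyz.simple_mul (i := i) (by have := hyz.2; omega)).bruhatLE
      exact ih.imp (·.trans hcov) (·.trans hcov)

theorem BruhatLE.simple_mul_bruhatLE_of_isLeftDescent (h : BruhatLE cs x y)
    (hy : cs.IsLeftDescent y i) : BruhatLE cs (cs.simple i * x) y :=
  (h.simple_mul_bruhatLE_or i).elim id (·.trans (simple_mul_bruhatLE hy))

theorem BruhatLE.bruhatLE_simple_mul_of_not_isLeftDescent (h : BruhatLE cs x y)
    (hx : ¬cs.IsLeftDescent x i) : BruhatLE cs x (cs.simple i * y) :=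
  (h.bruhatLE_simple_mul_or i).elim id (bruhatLE_simple_mul hx).trans

theorem simple_mul_bruhatLE_simple_mul_iff (hx : ¬cs.IsLeftDescent x i)
    (hy : ¬cs.IsLeftDescent y i) :
    BruhatLE cs (cs.simple i * x) (cs.simple i * y) ↔ BruhatLE cs x y := by
  refine ⟨fun h => ?_, fun h => ?_⟩
  · simpa only [simple_mul_simple_cancel_left] using
      ((bruhatLE_simple_mul hx).trans h).bruhatLE_simple_mul_of_not_isLeftDescent hx
  · exact (h.bruhatLE_simple_mul_of_not_isLeftDescent hx).simple_mul_bruhatLE_of_isLeftDescent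
      (cs.isLeftDescent_simple_mul_iff.mpr hy)

end Bruhat

section Interval

open CoxeterSystem

variable {B W : Type*} [Group W] {M : CoxeterMatrix B} {cs : CoxeterSystem M W} {j : B}
  {u v z : W}

theorem not_isLeftDescent_of_mem_bruhatInterval (huv : ¬BruhatLE cs (cs.simple j * u) v)
    (hz : z ∈ BruhatInterval cs u v) : ¬cs.IsLeftDescent z j :=
  fun hdesc => huv ((hz.1.simple_mul_bruhatLE_of_isLeftDescent hdesc).trans hz.2)

theorem isLeftDescent_of_mem_bruhatInterval_simple_mul (huv : ¬BruhatLE cs (cs.simple j * u) v)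
    (hz : z ∈ BruhatInterval cs (cs.simple j * u) (cs.simple j * v)) : cs.IsLeftDescent z j := by
  by_contra hasc
  have hzv := hz.2.bruhatLE_simple_mul_of_not_isLeftDescent hasc
  rw [simple_mul_simple_cancel_left] at hzv
  exact huv (hz.1.trans hzv)

theorem simple_mul_mem_bruhatInterval_simple_mul (huv : ¬BruhatLE cs (cs.simple j * u) v)
    (hz : z ∈ BruhatInterval cs u v) :
    cs.simple j * z ∈ BruhatInterval cs (cs.simple j * u) (cs.simple j * v) := by
  have hasc {w} (hw : w ∈ BruhatInterval cs u v) := not_isLeftDescent_of_mem_bruhatInterval huv hw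
  have huv' : BruhatLE cs u v := hz.1.trans hz.2
  exact ⟨(simple_mul_bruhatLE_simple_mul_iff (hasc ⟨.refl, huv'⟩) (hasc hz)).mpr hz.1,
    (simple_mul_bruhatLE_simple_mul_iff (hasc hz) (hasc ⟨huv', .refl⟩)).mpr hz.2⟩

theorem simple_mul_mem_bruhatInterval_of_mem_simple_mul
    (huv : ¬BruhatLE cs (cs.simple j * u) v)
    (hz : z ∈ BruhatInterval cs (cs.simple j * u) (cs.simple j * v)) :
    cs.simple j * z ∈ BruhatInterval cs u v := by
  have hdesc {w} (hw : w ∈ BruhatInterval cs (cs.simple j * u) (cs.simple j * v)) :=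
    isLeftDescent_of_mem_bruhatInterval_simple_mul huv hw
  have huv' := hz.1.trans hz.2
  have hu := cs.isLeftDescent_simple_mul_iff.mp (hdesc ⟨.refl, huv'⟩)
  have hv := cs.isLeftDescent_simple_mul_iff.mp (hdesc ⟨huv', .refl⟩)
  have hz' := cs.isLeftDescent_iff_not_isLeftDescent_mul.mp (hdesc hz)
  constructor
  · rw [← simple_mul_bruhatLE_simple_mul_iff hu hz', simple_mul_simple_cancel_left]
    exact hz.1
  · rw [← simple_mul_bruhatLE_simple_mul_iff hz' hv, simple_mul_simple_cancel_left]
    exact hz.2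

end Interval

theorem stmt9_general {B W : Type*} [Group W] {M : CoxeterMatrix B}
    (cs : CoxeterSystem M W) (c : W)
    (u₁ u₂ : W)
    (j : B) (hcov : u₂ = cs.simple j * u₁)
    (hnotle : ¬ BruhatLE cs u₂ (u₁ * c)) :
    (∀ z ∈ BruhatInterval cs u₁ (u₁ * c),
        ¬ cs.length (cs.simple j * z) < cs.length z) ∧
    (∀ z ∈ BruhatInterval cs u₂ (u₂ * c),
        cs.length (cs.simple j * z) < cs.length z) ∧
    (∀ z ∈ BruhatInterval cs u₁ (u₁ * c),
        cs.simple j * z ∈ BruhatInterval cs u₂ (u₂ * c)) ∧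
    (∀ z ∈ BruhatInterval cs u₂ (u₂ * c),
        cs.simple j * z ∈ BruhatInterval cs u₁ (u₁ * c)) ∧
    (∀ z ∈ BruhatInterval cs u₁ (u₁ * c), ∀ z' ∈ BruhatInterval cs u₁ (u₁ * c),
        (BruhatLE cs z z' ↔ BruhatLE cs (cs.simple j * z) (cs.simple j * z'))) := by
  subst hcov
  rw [mul_assoc]
  exact ⟨fun _ hz => not_isLeftDescent_of_mem_bruhatInterval hnotle hz,
    fun _ hz => isLeftDescent_of_mem_bruhatInterval_simple_mul hnotle hz,
    fun _ hz => simple_mul_mem_bruhatInterval_simple_mul hnotle hz,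
    fun _ hz => simple_mul_mem_bruhatInterval_of_mem_simple_mul hnotle hz,
    fun _ hz _ hz' => (simple_mul_bruhatLE_simple_mul_iff
      (not_isLeftDescent_of_mem_bruhatInterval hnotle hz)
      (not_isLeftDescent_of_mem_bruhatInterval hnotle hz')).symm⟩

theorem stmt9 {B W : Type*} [Group W] [Finite W] {M : CoxeterMatrix B}
    (cs : CoxeterSystem M W) (c : W) (hc : IsStandardCoxeterElement cs c)
    (u₁ u₂ : W)
    (hu₁ : cs.length (u₁ * c) = cs.length u₁ + cs.length c)
    (hu₂ : cs.length (u₂ * c) = cs.length u₂ + cs.length c)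
    (j : B) (hcov : u₂ = cs.simple j * u₁)
    (hlen : cs.length u₂ = cs.length u₁ + 1)
    (hnotle : ¬ BruhatLE cs u₂ (u₁ * c)) :
    (∀ z ∈ BruhatInterval cs u₁ (u₁ * c),
        ¬ cs.length (cs.simple j * z) < cs.length z) ∧
    (∀ z ∈ BruhatInterval cs u₂ (u₂ * c),
        cs.length (cs.simple j * z) < cs.length z) ∧
    (∀ z ∈ BruhatInterval cs u₁ (u₁ * c),
        cs.simple j * z ∈ BruhatInterval cs u₂ (u₂ * c)) ∧
    (∀ z ∈ BruhatInterval cs u₂ (u₂ * c),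
        cs.simple j * z ∈ BruhatInterval cs u₁ (u₁ * c)) ∧
    (∀ z ∈ BruhatInterval cs u₁ (u₁ * c), ∀ z' ∈ BruhatInterval cs u₁ (u₁ * c),
        (BruhatLE cs z z' ↔ BruhatLE cs (cs.simple j * z) (cs.simple j * z'))) :=
  stmt9_general cs c u₁ u₂ j hcov hnotle
end
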